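/- Let U be an uncountable subtree with countable levels of an ω₁-tree T, and let W be the downward closure of U in T. If b is a cofinal branch of W, then b ∩ U is uncountable; in particular U contains an uncountable chain. -/

import Mathlib

noncomputable section

open Cardinal

/-- The first uncountable ordinal. -/
def omegaOne : Ordinal := (Cardinal.aleph 1).ord

/-- A tree of height `ω₁`: a partial order in which the predecessors of every element form
a well-order, recorded by an ordinal-valued height function, with elements at every
countable height. -/
structure Tree1 where
  α : Type
  le : α → α → Prop
  le_refl : ∀ x, le x x
  le_antisymm : ∀ x y, le x y → le y x → x = y
  le_trans : ∀ x y z, le x y → le y z → le x z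
  ht : α → Ordinal
  ht_lt_omegaOne : ∀ x, ht x < omegaOne
  ht_strict : ∀ x y, le x y → x ≠ y → ht x < ht y
  pred_linear : ∀ x y z, le y x → le z x → (le y z ∨ le z y)
  pred_exists : ∀ x β, β < ht x → ∃ y, le y x ∧ ht y = β
  height_surj : ∀ β, β < omegaOne → ∃ x, ht x = β

namespace Tree1

variable (T : Tree1)

/-- Strict tree order. -/
def lt (x y : T.α) : Prop := T.le x y ∧ x ≠ y

def Incomp (x y : T.α) : Prop := ¬ T.le x y ∧ ¬ T.le y x

/-- A chain: a set of pairwise comparable elements. -/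
def Chain (C : Set T.α) : Prop := ∀ x ∈ C, ∀ y ∈ C, T.le x y ∨ T.le y x

/-- An antichain: a set of pairwise incomparable elements. -/
def Antichain (A : Set T.α) : Prop := ∀ x ∈ A, ∀ y ∈ A, x ≠ y → T.Incomp x y

/-- Level `β` of the tree. -/
def Level (β : Ordinal) : Set T.α := {x | T.ht x = β}

/-- An `ω₁`-tree has all levels countable. -/
def CountableLevels : Prop := ∀ β, (T.Level β).Countable

/-- Suslin: no uncountable chains and no uncountable antichains. -/
def Suslin : Prop :=
  (∀ C : Set T.α, T.Chain C → C.Countable) ∧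
  (∀ A : Set T.α, T.Antichain A → A.Countable)

def DownwardsClosed (W : Set T.α) : Prop := ∀ x y, T.le x y → y ∈ W → x ∈ W

/-- Normality: root, ≥ 2 immediate successors, unique limit nodes, successors at all
countable heights. -/
def Normal : Prop :=
  (∃ r, ∀ x, T.le r x) ∧
  (∀ x, ∃ y z : T.α, T.lt x y ∧ T.lt x z ∧ y ≠ z ∧
    T.ht y = T.ht x + 1 ∧ T.ht z = T.ht x + 1) ∧
  (∀ x y, T.ht x = T.ht y → Order.IsSuccLimit (T.ht x) → (∀ z, T.lt z x ↔ T.lt z y) → x = y) ∧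
  (∀ x β, T.ht x ≤ β → β < omegaOne → ∃ y, T.le x y ∧ T.ht y = β)

theorem lt_wf : WellFounded T.lt :=
  Subrelation.wf (fun {x y} h => T.ht_strict x y h.1 h.2) (InvImage.wf T.ht wellFounded_lt)

/-- The height of an element of a subtree `U ⊆ T` computed in the induced order. -/
def subHt (U : Set T.α) (x : U) : Ordinal :=
  @IsWellFounded.rank U (InvImage T.lt Subtype.val) ⟨InvImage.wf Subtype.val T.lt_wf⟩ x

/-- Levels of the subtree `U` (in the induced order) are countable. -/
def SubLevelsCountable (U : Set T.α) : Prop :=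
  ∀ β, {x : U | T.subHt U x = β}.Countable

/-- An Aronszajn subtree: an uncountable subset which, with the induced order, has countable
levels and no uncountable chain. -/
def AronszajnSubtree (U : Set T.α) : Prop :=
  ¬ U.Countable ∧ T.SubLevelsCountable U ∧ ∀ C ⊆ U, T.Chain C → C.Countable

/-- The downward closure of a set. -/
def DownwardClosure (U : Set T.α) : Set T.α := {x | ∃ y ∈ U, T.le x y}

/-- A cofinal branch: a downwards closed chain meeting every level. -/
def CofinalBranch (b : Set T.α) : Prop :=
  T.DownwardsClosed b ∧ T.Chain b ∧
    ∀ β, β < omegaOne → ∃ x ∈ b, T.ht x = β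

end Tree1

/-! If `b ∩ U` were countable, some `δ < ω₁` would bound the `U`-heights of its elements. For
`x ∈ b`, take `m ∈ U` minimal above `x`: every `U`-predecessor of `m` is comparable with `x`, so by
minimality lies below `x`, hence in `b`; thus `m` has `U`-height at most `δ`. The elements of `U`
of `U`-height at most `δ` fill countably many countable levels, so their `T`-heights are bounded
by some `γ < ω₁`. But the uncountable chain `b` has an element `x` of height at least `γ`, and
then `m ≥ x` violates this bound. -/

open Ordinal

theorem omegaOne_eq_omega_one : omegaOne = ω₁ := Cardinal.ord_aleph 1

theorem isSuccLimit_omegaOne : Order.IsSuccLimit omegaOne :=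
  omegaOne_eq_omega_one ▸ isSuccLimit_omega 1

theorem countable_Iio_of_lt_omegaOne {γ : Ordinal.{0}} (hγ : γ < omegaOne) :
    (Set.Iio γ).Countable := by
  rw [← Cardinal.le_aleph0_iff_set_countable, Cardinal.mk_Iio_ordinal, Cardinal.lift_le_aleph0,
    ← Cardinal.lt_aleph_one_iff]
  exact Cardinal.lt_ord.mp hγ

theorem countable_Iic_of_lt_omegaOne {γ : Ordinal.{0}} (hγ : γ < omegaOne) :
    (Set.Iic γ).Countable :=
  Order.Iio_succ γ ▸ countable_Iio_of_lt_omegaOne (isSuccLimit_omegaOne.succ_lt hγ)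

theorem exists_lt_omegaOne_forall_lt {ι : Type} {A : Set ι} (hA : A.Countable)
    {f : ι → Ordinal.{0}} (hf : ∀ i ∈ A, f i < omegaOne) :
    ∃ γ < omegaOne, ∀ i ∈ A, f i < γ := by
  have := hA.to_subtype
  rw [omegaOne_eq_omega_one] at hf ⊢
  refine ⟨⨆ i : A, Order.succ (f i), ?_, fun i hi => ?_⟩
  · exact Ordinal.iSup_lt_omega_one fun i => (isSuccLimit_omega 1).succ_lt (hf i i.2)
  · exact (Order.lt_succ _).trans_le (Ordinal.le_iSup (fun i : A => Order.succ (f i)) ⟨i, hi⟩)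

namespace Tree1

variable {T : Tree1}

theorem ht_mono {x y : T.α} (h : T.le x y) : T.ht x ≤ T.ht y := by
  rcases eq_or_ne x y with rfl | hne
  exacts [le_rfl, (T.ht_strict x y h hne).le]

theorem Chain.injOn_ht {C : Set T.α} (hC : T.Chain C) : Set.InjOn T.ht C := by
  intro x hx y hy hxy
  by_contra hne
  rcases hC x hx y hy with h | h
  exacts [(T.ht_strict x y h hne).ne hxy, (T.ht_strict y x h (Ne.symm hne)).ne hxy.symm]

theorem Chain.countable_of_forall_ht_lt {C : Set T.α} (hC : T.Chain C) {γ : Ordinal}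
    (hγ : γ < omegaOne) (hCγ : ∀ x ∈ C, T.ht x < γ) : C.Countable :=
  Set.MapsTo.countable_of_injOn hCγ hC.injOn_ht (countable_Iio_of_lt_omegaOne hγ)

theorem Chain.exists_le_ht {C : Set T.α} (hC : T.Chain C) (hunc : ¬ C.Countable)
    {γ : Ordinal} (hγ : γ < omegaOne) : ∃ x ∈ C, γ ≤ T.ht x := by
  by_contra! h
  exact hunc (hC.countable_of_forall_ht_lt hγ h)

theorem chain_setOf_lt (y : T.α) : T.Chain {x | T.lt x y} :=
  fun x hx z hz => T.pred_linear y x z hx.1 hz.1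

variable {U : Set T.α}

instance isWellFounded_subtype (U : Set T.α) : IsWellFounded U (InvImage T.lt Subtype.val) :=
  ⟨InvImage.wf _ T.lt_wf⟩

theorem subHt_le_of_forall_lt {y : U} {δ : Ordinal} (h : ∀ z : U, T.lt z y → T.subHt U z < δ) :
    T.subHt U y ≤ δ := by
  rw [subHt, IsWellFounded.rank_eq]
  exact Ordinal.iSup_le fun z => Order.succ_le_of_lt (h z z.2)

theorem subHt_lt_omegaOne (x : U) : T.subHt U x < omegaOne := by
  refine IsWellFounded.induction (InvImage T.lt Subtype.val)
    (motive := fun x => T.subHt U x < omegaOne) x fun y ih => ?_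
  have hpred : {z : U | T.lt z y}.Countable :=
    ((chain_setOf_lt y.1).countable_of_forall_ht_lt (T.ht_lt_omegaOne y)
      fun x hx => T.ht_strict x y.1 hx.1 hx.2).preimage Subtype.val_injective
  obtain ⟨γ, hγ, hyγ⟩ := exists_lt_omegaOne_forall_lt hpred ih
  exact (subHt_le_of_forall_lt hyγ).trans_lt hγ

theorem countable_setOf_subHt_le (hU : T.SubLevelsCountable U) {δ : Ordinal}
    (hδ : δ < omegaOne) : {x : U | T.subHt U x ≤ δ}.Countable := by
  have hIic : {x : U | T.subHt U x ≤ δ} = ⋃ β ∈ Set.Iic δ, {x : U | T.subHt U x = β} := by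
    ext; simp
  rw [hIic]
  exact (countable_Iic_of_lt_omegaOne hδ).biUnion fun β _ => hU β

theorem exists_le_forall_lt_mem {b : Set T.α}
    (hbdc : ∀ x y, x ∈ T.DownwardClosure U → T.le x y → y ∈ b → x ∈ b)
    {x : T.α} (hxb : x ∈ b) (hxU : x ∈ T.DownwardClosure U) :
    ∃ m : U, T.le x m ∧ ∀ z : U, T.lt z m → z.1 ∈ b := by
  obtain ⟨u, huU, hxu⟩ := hxU
  obtain ⟨m, ⟨hmU, hxm⟩, hmin⟩ := T.lt_wf.has_min {w | w ∈ U ∧ T.le x w} ⟨u, huU, hxu⟩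
  refine ⟨⟨m, hmU⟩, hxm, fun z hzm => ?_⟩
  rcases T.pred_linear m z x hzm.1 hxm with hzx | hxz
  · exact hbdc z x ⟨z, z.2, T.le_refl z⟩ hzx hxb
  · exact absurd hzm (hmin z ⟨z.2, hxz⟩)

theorem not_countable_inter_of_branch (hU : T.SubLevelsCountable U) {b : Set T.α}
    (hbW : b ⊆ T.DownwardClosure U) (hbchain : T.Chain b)
    (hbdc : ∀ x y, x ∈ T.DownwardClosure U → T.le x y → y ∈ b → x ∈ b)
    (hbunc : ¬ b.Countable) : ¬ (b ∩ U).Countable := by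
  intro hbU
  obtain ⟨δ, hδ, hbUδ⟩ := exists_lt_omegaOne_forall_lt (hbU.preimage Subtype.val_injective)
    fun x _ => subHt_lt_omegaOne x
  obtain ⟨γ, hγ, hγδ⟩ := exists_lt_omegaOne_forall_lt (f := fun x : U => T.ht x)
    (countable_setOf_subHt_le hU hδ) fun x _ => T.ht_lt_omegaOne x
  obtain ⟨x, hxb, hγx⟩ := hbchain.exists_le_ht hbunc hγ
  obtain ⟨m, hxm, hm⟩ := exists_le_forall_lt_mem hbdc hxb (hbW hxb)
  have hmδ : T.subHt U m ≤ δ := subHt_le_of_forall_lt fun z hz => hbUδ z ⟨hm z hz, z.2⟩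
  exact (hγδ m hmδ).not_ge (hγx.trans (ht_mono hxm))

end Tree1

theorem rigidKurepa_stmt1_general (T : Tree1)
    (U : Set T.α) (hU2 : T.SubLevelsCountable U)
    (b : Set T.α) (hbW : b ⊆ T.DownwardClosure U) (hbchain : T.Chain b)
    (hbdc : ∀ x y, x ∈ T.DownwardClosure U → T.le x y → y ∈ b → x ∈ b)
    (hbunc : ¬ b.Countable) :
    ¬ (b ∩ U).Countable ∧ ∃ C ⊆ U, T.Chain C ∧ ¬ C.Countable := by
  have hbU := Tree1.not_countable_inter_of_branch hU2 hbW hbchain hbdc hbunc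
  exact ⟨hbU, b ∩ U, Set.inter_subset_right, fun x hx y hy => hbchain x hx.1 y hy.1, hbU⟩

/-- if `U` is an uncountable subtree with countable levels of an `ω₁`-tree `T`,
`W` is its downward closure, and `b` is a cofinal branch of `W` (an uncountable chain of `W`,
downwards closed in `W`), then `b ∩ U` is uncountable; in particular `U` contains an
uncountable chain. -/
theorem rigidKurepa_stmt1 (T : Tree1) (hT : T.CountableLevels)
    (U : Set T.α) (hU1 : ¬ U.Countable) (hU2 : T.SubLevelsCountable U)
    (b : Set T.α) (hbW : b ⊆ T.DownwardClosure U) (hbchain : T.Chain b)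
    (hbdc : ∀ x y, x ∈ T.DownwardClosure U → T.le x y → y ∈ b → x ∈ b)
    (hbunc : ¬ b.Countable) :
    ¬ (b ∩ U).Countable ∧ ∃ C ⊆ U, T.Chain C ∧ ¬ C.Countable :=
  rigidKurepa_stmt1_general T U hU2 b hbW hbchain hbdc hbunc
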